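/- arXiv:1903.01447 — 2 statements merged into one kernel-verified Lean document; each statement's English description precedes it below -/
import Mathlib

section
/- Let c > 0, E_0 > 0, s_r > 0, k > 0, β > 0, and let q_f : [0,∞) → ℝ be continuous with 0 ≤ q_f(t) ≤ q̄_f and q̄_f < c k s_r / β. Define E(t) = e^{-ct} ( E_0 + (k s_r/β)(e^{ct} − 1) − ∫_0^t e^{cτ} q_f(τ) dτ ). Then E(t) > 0 for all t ≥ 0, and E satisfies E'(t) = q_c(t) − q_f(t) where q_c(t) = c(k s_r/β − E(t)). -/
open Real intervalIntegral

open MeasureTheory (volume)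

/-!
`E` is the variation-of-constants solution of `E' = c (k sᵣ/β - E) - q_f`, which gives the
derivative by the fundamental theorem of calculus. Bounding `q_f ≤ q̄_f` inside the integral gives
`E(t) ≥ e^{-ct} (E₀ + (k sᵣ/β - q̄_f/c)(e^{ct} - 1)) ≥ e^{-ct} E₀ > 0`, because the gain condition
makes `k sᵣ/β - q̄_f/c` nonnegative.
-/

/-- The solution of `x' = c (a - x) - g` with `x 0 = x₀`. -/
noncomputable def duhamelSolution (c a x₀ : ℝ) (g : ℝ → ℝ) (t : ℝ) : ℝ :=
  exp (-c * t) * (x₀ + a * (exp (c * t) - 1) - ∫ τ in (0 : ℝ)..t, exp (c * τ) * g τ)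

theorem integral_exp_mul (c a b : ℝ) (hc : c ≠ 0) :
    ∫ x in a..b, exp (c * x) = (exp (c * b) - exp (c * a)) / c := by
  rw [integral_comp_mul_left (fun x => exp x) hc, integral_exp, smul_eq_mul, inv_mul_eq_div]

theorem integral_exp_mul_mul_le {c b t : ℝ} {g : ℝ → ℝ} (hc : c ≠ 0) (ht : 0 ≤ t)
    (hg : IntervalIntegrable g volume 0 t) (hgb : ∀ τ ∈ Set.Icc 0 t, g τ ≤ b) :
    ∫ τ in (0 : ℝ)..t, exp (c * τ) * g τ ≤ b / c * (exp (c * t) - 1) :=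
  calc ∫ τ in (0 : ℝ)..t, exp (c * τ) * g τ
      ≤ ∫ τ in (0 : ℝ)..t, exp (c * τ) * b := by
        refine integral_mono_on ht (hg.continuousOn_mul (by fun_prop))
          ((by fun_prop : Continuous fun τ => exp (c * τ) * b).intervalIntegrable 0 t)
          fun τ hτ => ?_
        exact mul_le_mul_of_nonneg_left (hgb τ hτ) (exp_pos _).le
    _ = b / c * (exp (c * t) - 1) := by
        rw [integral_mul_const, integral_exp_mul c 0 t hc, mul_zero, exp_zero]
        ring

theorem hasDerivAt_duhamelSolution (c a x₀ : ℝ) {g : ℝ → ℝ} (hg : Continuous g) (t : ℝ) :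
    HasDerivAt (duhamelSolution c a x₀ g) (c * (a - duhamelSolution c a x₀ g t) - g t) t := by
  have hI : HasDerivAt (fun u => ∫ τ in (0 : ℝ)..u, exp (c * τ) * g τ) (exp (c * t) * g t) t :=
    ((by fun_prop : Continuous fun τ => exp (c * τ)).mul hg).integral_hasStrictDerivAt 0 t
      |>.hasDerivAt
  have hpos : HasDerivAt (fun u => exp (c * u)) (exp (c * t) * c) t := by
    simpa using ((hasDerivAt_id t).const_mul c).exp
  have hneg : HasDerivAt (fun u => exp (-c * u)) (exp (-c * t) * -c) t := by
    simpa using ((hasDerivAt_id t).const_mul (-c)).exp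
  refine (hneg.mul (((hpos.sub_const 1).const_mul a).const_add x₀ |>.sub hI)).congr_deriv ?_
  have hinv : exp (-c * t) * exp (c * t) = 1 := by rw [← exp_add]; simp
  simp only [duhamelSolution, Pi.sub_apply]
  linear_combination (c * a - g t) * hinv

theorem duhamelSolution_pos {c a x₀ b t : ℝ} {g : ℝ → ℝ} (hc : 0 < c) (hx₀ : 0 < x₀)
    (ht : 0 ≤ t) (hg : IntervalIntegrable g volume 0 t)
    (hgb : ∀ τ ∈ Set.Icc 0 t, g τ ≤ b) (hba : b ≤ c * a) :
    0 < duhamelSolution c a x₀ g t := by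
  have hI := integral_exp_mul_mul_le hc.ne' ht hg hgb
  have hexp : 0 ≤ exp (c * t) - 1 := sub_nonneg.2 (one_le_exp (by positivity))
  have hgain : b / c * (exp (c * t) - 1) ≤ a * (exp (c * t) - 1) :=
    mul_le_mul_of_nonneg_right ((div_le_iff₀ hc).2 (by linarith)) hexp
  exact mul_pos (exp_pos _) (by linarith)

theorem stmt_3_general (c E0 sr k β qbar : ℝ) (hc : 0 < c) (hE0 : 0 < E0)
    (qf : ℝ → ℝ) (hqf_cont : Continuous qf)
    (hqf : ∀ t, 0 ≤ t → 0 ≤ qf t ∧ qf t ≤ qbar)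
    (hgain : qbar < c * k * sr / β)
    (E qc : ℝ → ℝ)
    (hE : E = fun t => Real.exp (-c * t) *
      (E0 + (k * sr / β) * (Real.exp (c * t) - 1) -
        ∫ τ in (0:ℝ)..t, Real.exp (c * τ) * qf τ))
    (hqc : qc = fun t => c * (k * sr / β - E t)) :
    ∀ t, 0 ≤ t → 0 < E t ∧ HasDerivAt E (qc t - qf t) t := by
  intro t ht
  have hEsol : E = duhamelSolution c (k * sr / β) E0 qf := hE
  have hba : qbar ≤ c * (k * sr / β) := by rw [← mul_div_assoc, ← mul_assoc]; exact hgain.le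
  subst hqc
  rw [hEsol]
  exact ⟨duhamelSolution_pos hc hE0 ht (hqf_cont.intervalIntegrable 0 t)
      (fun τ hτ => (hqf τ hτ.1).2) hba,
    hasDerivAt_duhamelSolution c _ E0 hqf_cont t⟩

theorem stmt_3 (c E0 sr k β qbar : ℝ) (hc : 0 < c) (hE0 : 0 < E0) (hsr : 0 < sr)
    (hk : 0 < k) (hβ : 0 < β)
    (qf : ℝ → ℝ) (hqf_cont : Continuous qf)
    (hqf : ∀ t, 0 ≤ t → 0 ≤ qf t ∧ qf t ≤ qbar)
    (hgain : qbar < c * k * sr / β)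
    (E qc : ℝ → ℝ)
    (hE : E = fun t => Real.exp (-c * t) *
      (E0 + (k * sr / β) * (Real.exp (c * t) - 1) -
        ∫ τ in (0:ℝ)..t, Real.exp (c * τ) * qf τ))
    (hqc : qc = fun t => c * (k * sr / β - E t)) :
    ∀ t, 0 ≤ t → 0 < E t ∧ HasDerivAt E (qc t - qf t) t :=
  stmt_3_general c E0 sr k β qbar hc hE0 qf hqf_cont hqf hgain E qc hE hqc
end

section
/- Let a, b > 0, Γ ≥ 0, let V : [0,∞) → [0,∞) be C¹, z : [0,∞) → ℝ be C¹ with 0 < z(t) ≤ z̄ for all t, and d continuous, such that V'(t) ≤ −b V(t) + Γ d(t)² + a z'(t) V(t). Then V(t) ≤ V(0) e^{a z̄} e^{−(b/2)t} + (2Γ/b) e^{a z̄} sup_{τ∈[0,t]} d(τ)². -/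
/-!
With the weight `W = V e^{-a z}`, the term `a z' V` disappears from the differential inequality:
`W' = (V' - a z' V) e^{-a z} ≤ -b W + Γ d² e^{-a z} ≤ -b W + Γ d²` because `z > 0`. Grönwall's
inequality then bounds `W` by `W(0) e^{-b t} + Γ sup d² / b`, and `V = W e^{a z} ≤ W e^{a z̄}`.
-/

open Real Set

theorem le_mul_exp_neg_add_div_of_deriv_right_le {f f' : ℝ → ℝ} {b c T : ℝ} (hb : 0 < b)
    (hc : 0 ≤ c) (hf : ContinuousOn f (Icc 0 T))
    (hf' : ∀ x ∈ Ico 0 T, HasDerivWithinAt f (f' x) (Ici x) x)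
    (bound : ∀ x ∈ Ico 0 T, f' x ≤ -b * f x + c) (hT : 0 ≤ T) :
    f T ≤ f 0 * exp (-b * T) + c / b := by
  have := le_gronwallBound_of_liminf_deriv_right_le hf
    (fun x hx _ hr => (hf' x hx).liminf_right_slope_le hr) le_rfl bound T ⟨hT, le_rfl⟩
  rw [gronwallBound_of_K_ne_0 (neg_ne_zero.mpr hb.ne'), sub_zero] at this
  refine this.trans (add_le_add_right ?_ _)
  rw [div_neg, neg_mul_comm, neg_sub]
  exact mul_le_of_le_one_right (div_nonneg hc hb.le) (sub_le_self _ (exp_pos _).le)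

theorem hasDerivAt_mul_exp_neg_mul {V z : ℝ → ℝ} {v' w' a t : ℝ} (hV : HasDerivAt V v' t)
    (hz : HasDerivAt z w' t) :
    HasDerivAt (fun s => V s * exp (-a * z s)) ((v' - a * w' * V t) * exp (-a * z t)) t :=
  (hV.fun_mul (hz.const_mul (-a)).exp).congr_deriv (by ring)

theorem mul_exp_neg_mul_deriv_le {a b Γ v v' z w' q : ℝ} (hz : 0 ≤ a * z) (hq : 0 ≤ Γ * q)
    (h : v' ≤ -b * v + Γ * q + a * w' * v) :
    (v' - a * w' * v) * exp (-a * z) ≤ -b * (v * exp (-a * z)) + Γ * q := by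
  have he : exp (-a * z) ≤ 1 := exp_le_one_iff.mpr (by linarith)
  calc (v' - a * w' * v) * exp (-a * z) ≤ (-b * v + Γ * q) * exp (-a * z) :=
        mul_le_mul_of_nonneg_right (by linarith) (exp_pos _).le
    _ = -b * (v * exp (-a * z)) + Γ * q * exp (-a * z) := by ring
    _ ≤ -b * (v * exp (-a * z)) + Γ * q := by grw [mul_le_of_le_one_right hq he]

theorem stmt_5_general (a b Γ zbar : ℝ) (ha : 0 < a) (hb : 0 < b) (hΓ : 0 ≤ Γ)
    (V V' z z' d : ℝ → ℝ)
    (hV_nn : ∀ t, 0 ≤ t → 0 ≤ V t)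
    (hV_deriv : ∀ t, 0 ≤ t → HasDerivAt V (V' t) t)
    (hz_deriv : ∀ t, 0 ≤ t → HasDerivAt z (z' t) t)
    (hz_bnd : ∀ t, 0 ≤ t → 0 < z t ∧ z t ≤ zbar)
    (hd_cont : Continuous d)
    (hineq : ∀ t, 0 ≤ t → V' t ≤ -b * V t + Γ * (d t) ^ 2 + a * z' t * V t) :
    ∀ t, 0 ≤ t →
      V t ≤ V 0 * Real.exp (a * zbar) * Real.exp (-(b / 2) * t) +
        (2 * Γ / b) * Real.exp (a * zbar) * sSup ((fun τ => (d τ) ^ 2) '' Icc 0 t) := by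
  intro T hT
  set M := sSup ((fun τ => (d τ) ^ 2) '' Icc 0 T)
  have hdM : ∀ s ∈ Icc 0 T, d s ^ 2 ≤ M := fun s hs =>
    (by fun_prop : Continuous fun τ => d τ ^ 2).continuousOn.le_sSup_image_Icc hs
  have hM : 0 ≤ M := (sq_nonneg _).trans (hdM 0 ⟨le_rfl, hT⟩)
  have hV0 : 0 ≤ V 0 := hV_nn 0 le_rfl
  have haz : ∀ t, 0 ≤ t → 0 ≤ a * z t := fun t ht => mul_nonneg ha.le (hz_bnd t ht).1.le
  set W := fun s => V s * exp (-a * z s)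
  have hW : ∀ t, 0 ≤ t → HasDerivAt W ((V' t - a * z' t * V t) * exp (-a * z t)) t :=
    fun t ht => hasDerivAt_mul_exp_neg_mul (hV_deriv t ht) (hz_deriv t ht)
  have hWT : W T ≤ W 0 * exp (-b * T) + Γ * M / b :=
    le_mul_exp_neg_add_div_of_deriv_right_le hb (by positivity)
      (fun t ht => (hW t ht.1).continuousAt.continuousWithinAt)
      (fun t ht => (hW t ht.1).hasDerivWithinAt)
      (fun t ht => (mul_exp_neg_mul_deriv_le (haz t ht.1) (by positivity) (hineq t ht.1)).trans
        (by grw [hdM t (Ico_subset_Icc_self ht)]))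
      hT
  have hW0 : W 0 ≤ V 0 :=
    mul_le_of_le_one_right hV0 (exp_le_one_iff.mpr (by linarith [haz 0 le_rfl]))
  have hdecay : exp (-b * T) ≤ exp (-(b / 2) * T) := exp_le_exp.mpr (by nlinarith)
  calc V T = W T * exp (a * z T) := by
        simp only [W, mul_assoc, ← exp_add, neg_mul, neg_add_cancel, exp_zero, mul_one]
    _ ≤ (V 0 * exp (-(b / 2) * T) + 2 * (Γ * M / b)) * exp (a * zbar) := by
      gcongr
      · grw [hWT, hW0, hdecay]
        linarith [show 0 ≤ Γ * M / b by positivity]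
      · exact (hz_bnd T hT).2
    _ = _ := by ring

theorem stmt_5 (a b Γ zbar : ℝ) (ha : 0 < a) (hb : 0 < b) (hΓ : 0 ≤ Γ)
    (V V' z z' d : ℝ → ℝ)
    (hV_nn : ∀ t, 0 ≤ t → 0 ≤ V t)
    (hV_deriv : ∀ t, 0 ≤ t → HasDerivAt V (V' t) t)
    (hV'_cont : Continuous V')
    (hz_deriv : ∀ t, 0 ≤ t → HasDerivAt z (z' t) t)
    (hz'_cont : Continuous z')
    (hz_bnd : ∀ t, 0 ≤ t → 0 < z t ∧ z t ≤ zbar)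
    (hd_cont : Continuous d)
    (hineq : ∀ t, 0 ≤ t → V' t ≤ -b * V t + Γ * (d t) ^ 2 + a * z' t * V t) :
    ∀ t, 0 ≤ t →
      V t ≤ V 0 * Real.exp (a * zbar) * Real.exp (-(b / 2) * t) +
        (2 * Γ / b) * Real.exp (a * zbar) * sSup ((fun τ => (d τ) ^ 2) '' Icc 0 t) :=
  stmt_5_general a b Γ zbar ha hb hΓ V V' z z' d hV_nn hV_deriv hz_deriv hz_bnd hd_cont hineq
end
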